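/- Let Ω be a topological space, X a locally convex space, V a family of nonnegative upper semicontinuous weights, W ⊆ F(Ω, X), f : Ω → X, A ⊆ C(Ω, ℂ) a multiplier of W, p a continuous seminorm on X, v ∈ V. Assume f − g ∈ CV₀(Ω, X) for all g ∈ W (i.e., for every ε > 0 the closed set {x : v(x)p(f(x)−g(x)) ≥ ε} is compact). Then there exists an (A, v)-antisymmetric set S ⊆ supp v such that d_{v,p,S}(f, W) = d_{v,p,Ω}(f, W). -/

import Mathlib

open scoped ENNReal

/-- The weighted sup-distance `d_{v,p,E}(f, W)` valued in `ℝ≥0∞`. -/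
noncomputable def wDistOn {Ω X : Type*} [AddCommGroup X] [Module ℂ X]
    (p : Seminorm ℂ X) (v : Ω → ℝ) (E : Set Ω) (f : Ω → X)
    (W : Set (Ω → X)) : ℝ≥0∞ :=
  ⨅ g ∈ W, ⨆ x ∈ E, ENNReal.ofReal (v x * p (f x - g x))

/-!
Zorn's lemma gives a minimal closed set `S` with `d_S(f, W) = d_Ω(f, W)`: along a chain of such
sets the distance survives in the intersection, by Cantor's intersection theorem applied to the
compact sets `{x | r ≤ v x * p (f x - g x)}`. Suppose a multiplier `φ ∈ A`, real with values in
`[0, 1]` on `S ∩ {v ≠ 0}`, took values `a < b` there, and pick `a < c₁ < c₂ < b`. The closed sets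
`S ∩ {Re φ ≤ c₂}` and `S ∩ {c₁ ≤ Re φ}` are proper subsets of `S`, so by minimality both admit
approximants `g₁, g₂ ∈ W` better than `d_S`. The multiplier `ψ = 1 - (1 - φⁿ)ᵐ` is close to `0`
where `Re φ ≤ c₁` and close to `1` where `c₂ ≤ Re φ`, so `ψ g₂ + (1 - ψ) g₁ ∈ W` is better than
`d_S` on all of `S`, a contradiction. Points where `v` vanishes contribute nothing to `d_S`, so
`S ∩ {v ≠ 0}` is the required set.
-/

open Set Filter Topology

theorem UpperSemicontinuous.mul_continuous_of_nonneg {Ω : Type*} [TopologicalSpace Ω]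
    {v c : Ω → ℝ} (hv : UpperSemicontinuous v) (hv0 : ∀ x, 0 ≤ v x) (hc : Continuous c)
    (hc0 : ∀ x, 0 ≤ c x) : UpperSemicontinuous fun x => v x * c x := by
  intro x₀ y hy
  have hlim : Tendsto (fun ε : ℝ => (v x₀ + ε) * (c x₀ + ε)) (𝓝[>] 0) (𝓝 (v x₀ * c x₀)) := by
    refine tendsto_nhdsWithin_of_tendsto_nhds ((by fun_prop : Continuous _).tendsto' _ _ ?_)
    simp
  obtain ⟨ε, hεy, hε⟩ := ((hlim.eventually_lt_const hy).and self_mem_nhdsWithin).exists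
  filter_upwards [hv x₀ _ (lt_add_of_pos_right _ hε),
    (hc.tendsto x₀).eventually_lt_const (lt_add_of_pos_right _ hε)] with x hvx hcx
  exact (mul_lt_mul'' hvx hcx (hv0 x) (hc0 x)).trans hεy

theorem UpperSemicontinuous.exists_forall_le_of_isCompact {Ω : Type*} [TopologicalSpace Ω]
    {u : Ω → ℝ} (hu : UpperSemicontinuous u) {c : ℝ} (hK : IsCompact {x | c ≤ u x}) :
    ∃ M, ∀ x, u x ≤ M := by
  obtain ⟨M, hM⟩ := (hu.upperSemicontinuousOn _).bddAbove_of_isCompact hK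
  refine ⟨max M c, fun x => ?_⟩
  by_cases hx : c ≤ u x
  · exact (hM ⟨x, hx, rfl⟩).trans (le_max_left _ _)
  · exact (not_le.1 hx).le.trans (le_max_right _ _)

theorem le_iSup_sInter_of_isChain {Ω : Type*} [TopologicalSpace Ω] {u : Ω → ℝ}
    (hu : UpperSemicontinuous u) (hK : ∀ r > 0, IsCompact {x | r ≤ u x})
    {c : Set (Set Ω)} (hc : IsChain (· ⊆ ·) c) (hne : c.Nonempty) (hcl : ∀ E ∈ c, IsClosed E)
    {a : ℝ≥0∞} (ha : ∀ E ∈ c, a ≤ ⨆ x ∈ E, ENNReal.ofReal (u x)) :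
    a ≤ ⨆ x ∈ ⋂₀ c, ENNReal.ofReal (u x) := by
  by_contra! hlt
  obtain ⟨r, hr0, hsup, hra⟩ := ENNReal.lt_iff_exists_real_btwn.1 hlt
  have hr : 0 < r := ENNReal.ofReal_pos.1 (hsup.trans_le' bot_le)
  have : Nonempty c := hne.to_subtype
  have hmeet : ∀ E : c, ((E : Set Ω) ∩ {x | r ≤ u x}).Nonempty := fun ⟨E, hE⟩ => by
    obtain ⟨x, hx, hrx⟩ := lt_biSup_iff.1 (hra.trans_le (ha E hE))
    exact ⟨x, hx, ((ENNReal.ofReal_lt_ofReal_iff_of_nonneg hr0).1 hrx).le⟩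
  have hdir : DirectedOn (· ⊇ ·) c := fun E hE F hF =>
    (hc.total hE hF).elim (fun h => ⟨E, hE, subset_rfl, h⟩) fun h => ⟨F, hF, h, subset_rfl⟩
  obtain ⟨x, hx⟩ := IsCompact.nonempty_iInter_of_directed_nonempty_isCompact_isClosed _
    (hdir.directed_val.mono_comp _ fun _ _ h => inter_subset_inter_left _ h)
    hmeet (fun E => (hK r hr).inter_left (hcl E E.2))
    (fun E => (hcl E E.2).inter (hu.isClosed_preimage r))
  rw [mem_iInter] at hx
  have hxc : x ∈ ⋂₀ c := mem_sInter.2 fun E hE => (hx ⟨E, hE⟩).1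
  have hxr : r ≤ u x := (hx (Classical.arbitrary c)).2
  exact ((le_biSup (fun x => ENNReal.ofReal (u x)) hxc).trans_lt hsup).not_ge
    (ENNReal.ofReal_le_ofReal hxr)

theorem one_sub_pow_mul_one_add_mul_le_one {s : ℝ} (hs0 : 0 ≤ s) (hs1 : s ≤ 1) (m : ℕ) :
    (1 - s) ^ m * (1 + m * s) ≤ 1 :=
  calc (1 - s) ^ m * (1 + m * s) ≤ (1 - s) ^ m * (1 + s) ^ m :=
        mul_le_mul_of_nonneg_left (one_add_mul_le_pow (by linarith) m)
          (pow_nonneg (by linarith) m)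
    _ = (1 - s ^ 2) ^ m := by rw [← mul_pow]; ring
    _ ≤ 1 := pow_le_one₀ (by nlinarith) (by nlinarith)

theorem exists_one_sub_pow_pow_near_one_and_zero {c₁ c₂ δ : ℝ} (hc₁ : 0 < c₁) (hc₁₂ : c₁ < c₂)
    (hc₂₁ : c₂ ≤ 1) (hδ : 0 < δ) : ∃ n m : ℕ, (∀ t ∈ Icc 0 c₁, 1 - δ ≤ (1 - t ^ n) ^ m) ∧
      ∀ t ∈ Icc c₂ 1, (1 - t ^ n) ^ m ≤ δ := by
  obtain ⟨c, hc₁c, hcc₂⟩ := exists_between hc₁₂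
  have hc : 0 < c := hc₁.trans hc₁c
  have hc₂ : 0 < c₂ := hc₁.trans hc₁₂
  obtain ⟨n, hn⟩ := exists_pow_lt_of_lt_one hδ
    (max_lt ((div_lt_one hc).2 hc₁c) ((div_lt_one hc₂).2 hcc₂))
  have hn₁ : (c₁ / c) ^ n < δ :=
    (pow_le_pow_left₀ (by positivity) (le_max_left _ _) n).trans_lt hn
  have hn₂ : (c / c₂) ^ n < δ :=
    (pow_le_pow_left₀ (by positivity) (le_max_right _ _) n).trans_lt hn
  -- `m ≈ c⁻ⁿ` makes `m tⁿ` small for `t ≤ c₁` and large for `t ≥ c₂`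
  set m := ⌊(c ^ n)⁻¹⌋₊
  have hm_le : (m : ℝ) ≤ (c ^ n)⁻¹ := Nat.floor_le (by positivity)
  have hm_gt : (c ^ n)⁻¹ < m + 1 := Nat.lt_floor_add_one _
  refine ⟨n, m, fun t ⟨ht0, ht⟩ => ?_, fun t ⟨ht, ht1⟩ => ?_⟩
  · have htn : t ^ n ≤ 1 := pow_le_one₀ ht0 (by linarith)
    have hsmall : m * t ^ n ≤ (c₁ / c) ^ n :=
      calc (m : ℝ) * t ^ n ≤ (c ^ n)⁻¹ * c₁ ^ n :=
            mul_le_mul hm_le (pow_le_pow_left₀ ht0 ht n) (by positivity) (by positivity)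
        _ = (c₁ / c) ^ n := by rw [div_pow, inv_mul_eq_div]
    have hbern := one_add_mul_le_pow (a := -t ^ n) (by linarith) m
    rw [← sub_eq_add_neg] at hbern
    linarith
  · have ht0 : 0 ≤ t := hc₂.le.trans ht
    have htn : t ^ n ≤ 1 := pow_le_one₀ ht0 ht1
    have hlarge : (c₂ / c) ^ n ≤ 1 + m * t ^ n :=
      calc (c₂ / c) ^ n = (c ^ n)⁻¹ * c₂ ^ n := by rw [div_pow, inv_mul_eq_div]
        _ ≤ (m + 1) * c₂ ^ n := mul_le_mul_of_nonneg_right hm_gt.le (by positivity)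
        _ ≤ 1 + m * t ^ n := by nlinarith [pow_le_pow_left₀ hc₂.le ht n]
    have hprod : (1 - t ^ n) ^ m * (c₂ / c) ^ n ≤ 1 :=
      (mul_le_mul_of_nonneg_left hlarge (pow_nonneg (by linarith) m)).trans
        (one_sub_pow_mul_one_add_mul_le_one (pow_nonneg ht0 n) htn m)
    calc (1 - t ^ n) ^ m = (1 - t ^ n) ^ m * (c₂ / c) ^ n * (c / c₂) ^ n := by
          rw [mul_assoc, ← mul_pow, div_mul_div_comm, mul_comm c₂ c, div_self (by positivity),
            one_pow, mul_one]
      _ ≤ (c / c₂) ^ n := mul_le_of_le_one_left (by positivity) hprod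
      _ ≤ δ := hn₂.le

def IsMultiplier {Ω X : Type*} [AddCommGroup X] [Module ℂ X] (W : Set (Ω → X))
    (ψ : Ω → ℂ) : Prop :=
  ∀ g ∈ W, ∀ h ∈ W, (fun x => ψ x • g x + (1 - ψ x) • h x) ∈ W

namespace IsMultiplier

variable {Ω X : Type*} [AddCommGroup X] [Module ℂ X] {W : Set (Ω → X)} {ψ χ : Ω → ℂ}

theorem one : IsMultiplier W 1 := fun g hg _ _ => by simpa using hg

theorem one_sub (hψ : IsMultiplier W ψ) : IsMultiplier W (1 - ψ) := fun g hg h hh => by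
  convert hψ h hh g hg using 2 with x
  simp only [Pi.sub_apply, Pi.one_apply, sub_sub_cancel]
  rw [add_comm]

theorem mul (hψ : IsMultiplier W ψ) (hχ : IsMultiplier W χ) : IsMultiplier W (ψ * χ) :=
  fun g hg h hh => by
    convert hψ _ (hχ g hg h hh) h hh using 2 with x
    simp only [Pi.mul_apply]
    module

theorem pow (hψ : IsMultiplier W ψ) : ∀ n : ℕ, IsMultiplier W (ψ ^ n)
  | 0 => by simpa using one
  | n + 1 => by simpa only [pow_succ] using (hψ.pow n).mul hψ

theorem exists_near_zero_near_one {φ : Ω → ℂ} (hφ : IsMultiplier W φ) {T : Set Ω}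
    (hφT : ∀ z ∈ T, φ z ∈ Complex.ofReal '' Icc 0 1) {c₁ c₂ δ : ℝ} (hc₁ : 0 < c₁)
    (hc₁₂ : c₁ < c₂) (hc₂ : c₂ ≤ 1) (hδ : 0 < δ) :
    ∃ ψ, IsMultiplier W ψ ∧ ∀ z ∈ T, ∃ w ∈ Icc (0 : ℝ) 1, ψ z = w ∧
      ((φ z).re ≤ c₁ → w ≤ δ) ∧ (c₂ ≤ (φ z).re → 1 - δ ≤ w) := by
  obtain ⟨n, m, hlow, hhigh⟩ := exists_one_sub_pow_pow_near_one_and_zero hc₁ hc₁₂ hc₂ hδ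
  refine ⟨1 - (1 - φ ^ n) ^ m, ((hφ.pow n).one_sub.pow m).one_sub, fun z hz => ?_⟩
  obtain ⟨t, ⟨ht0, ht1⟩, hφz⟩ := hφT z hz
  have htn : 0 ≤ 1 - t ^ n := sub_nonneg.2 (pow_le_one₀ ht0 ht1)
  simp only [← hφz, Complex.ofReal_re]
  refine ⟨1 - (1 - t ^ n) ^ m, ⟨?_, ?_⟩, by simp [← hφz], fun h => ?_, fun h => ?_⟩
  · linarith [pow_le_one₀ htn (by linarith [pow_nonneg ht0 n]) (n := m)]
  · linarith [pow_nonneg htn m]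
  · linarith [hlow t ⟨ht0, h⟩]
  · linarith [hhigh t ⟨h, ht1⟩]

end IsMultiplier

theorem Seminorm.map_sub_convexCombo_le {X : Type*} [AddCommGroup X] [Module ℂ X]
    (p : Seminorm ℂ X) (x y₁ y₂ : X) {w : ℝ} (hw : w ∈ Icc 0 1) :
    p (x - ((w : ℂ) • y₂ + (1 - (w : ℂ)) • y₁)) ≤ w * p (x - y₂) + (1 - w) * p (x - y₁) := by
  have hsplit : x - ((w : ℂ) • y₂ + (1 - (w : ℂ)) • y₁)
      = (w : ℂ) • (x - y₂) + ((1 - w : ℝ) : ℂ) • (x - y₁) := by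
    push_cast; module
  rw [hsplit]
  refine (map_add_le_add p _ _).trans_eq ?_
  rw [map_smul_eq_mul, map_smul_eq_mul, Complex.norm_real, Complex.norm_real,
    Real.norm_of_nonneg hw.1, Real.norm_of_nonneg (sub_nonneg.2 hw.2)]

section wDistOn

variable {Ω X : Type*} [AddCommGroup X] [Module ℂ X] {p : Seminorm ℂ X} {v : Ω → ℝ}
  {f : Ω → X} {W : Set (Ω → X)}

theorem wDistOn_mono {E F : Set Ω} (h : E ⊆ F) : wDistOn p v E f W ≤ wDistOn p v F f W :=
  iInf₂_mono fun _ _ => biSup_mono h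

theorem wDistOn_inter_ne_zero (S : Set Ω) :
    wDistOn p v (S ∩ {x | v x ≠ 0}) f W = wDistOn p v S f W := by
  refine le_antisymm (wDistOn_mono inter_subset_left)
    (iInf₂_mono fun g _ => iSup₂_le fun x hx => ?_)
  by_cases hv : v x = 0
  · simp [hv]
  · exact le_biSup (fun x => ENNReal.ofReal (v x * p (f x - g x))) ⟨hx, hv⟩

theorem wDistOn_le_ofReal {E : Set Ω} {g : Ω → X} (hg : g ∈ W) {r : ℝ}
    (h : ∀ x ∈ E, v x * p (f x - g x) ≤ r) : wDistOn p v E f W ≤ ENNReal.ofReal r :=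
  (iInf₂_le g hg).trans (iSup₂_le fun x hx => ENNReal.ofReal_le_ofReal (h x hx))

theorem exists_forall_lt_of_wDistOn_lt {E : Set Ω} {r : ℝ}
    (h : wDistOn p v E f W < ENNReal.ofReal r) : ∃ g ∈ W, ∀ x ∈ E, v x * p (f x - g x) < r := by
  simp only [wDistOn, iInf_lt_iff, exists_prop] at h
  obtain ⟨g, hg, hlt⟩ := h
  exact ⟨g, hg, fun x hx => (ENNReal.ofReal_lt_ofReal_iff'.1 ((le_biSup _ hx).trans_lt hlt)).1⟩

variable [TopologicalSpace Ω]

theorem le_wDistOn_sInter_of_isChain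
    (husc : ∀ g ∈ W, UpperSemicontinuous fun x => v x * p (f x - g x))
    (hcpt : ∀ g ∈ W, ∀ ε > (0 : ℝ), IsCompact {x | ε ≤ v x * p (f x - g x)})
    {c : Set (Set Ω)} (hc : IsChain (· ⊆ ·) c) (hne : c.Nonempty) (hcl : ∀ E ∈ c, IsClosed E)
    {d : ℝ≥0∞} (hd : ∀ E ∈ c, d ≤ wDistOn p v E f W) : d ≤ wDistOn p v (⋂₀ c) f W :=
  le_iInf₂ fun g hg => le_iSup_sInter_of_isChain (husc g hg) (hcpt g hg) hc hne hcl
    fun E hE => (hd E hE).trans (iInf₂_le g hg)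

theorem exists_minimal_isClosed_le_wDistOn
    (husc : ∀ g ∈ W, UpperSemicontinuous fun x => v x * p (f x - g x))
    (hcpt : ∀ g ∈ W, ∀ ε > (0 : ℝ), IsCompact {x | ε ≤ v x * p (f x - g x)}) :
    ∃ S, Minimal (fun E => IsClosed E ∧ wDistOn p v univ f W ≤ wDistOn p v E f W) S :=
  (zorn_superset_nonempty {E | IsClosed E ∧ wDistOn p v univ f W ≤ wDistOn p v E f W}
    (fun c hcP hc hne => ⟨⋂₀ c, ⟨isClosed_sInter fun _ hE => (hcP hE).1,
      le_wDistOn_sInter_of_isChain husc hcpt hc hne (fun _ hE => (hcP hE).1)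
        fun _ hE => (hcP hE).2⟩, fun _ => sInter_subset_of_mem⟩)
    univ ⟨isClosed_univ, le_rfl⟩).imp fun _ h => h.2

end wDistOn

section Localization

variable {Ω X : Type*} [AddCommGroup X] [Module ℂ X] {p : Seminorm ℂ X} {v : Ω → ℝ}
  {f : Ω → X} {W : Set (Ω → X)}

theorem wDistOn_le_max_of_isMultiplier (hv0 : ∀ x, 0 ≤ v x)
    (hbdd : ∀ g ∈ W, ∃ M, ∀ x, v x * p (f x - g x) ≤ M)
    {φ : Ω → ℂ} (hφ : IsMultiplier W φ) {S : Set Ω}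
    (hφS : ∀ z ∈ S ∩ {z | v z ≠ 0}, φ z ∈ Complex.ofReal '' Icc 0 1)
    {c₁ c₂ : ℝ} (hc₁ : 0 < c₁) (hc₁₂ : c₁ < c₂) (hc₂ : c₂ ≤ 1) :
    wDistOn p v S f W ≤ max (wDistOn p v (S ∩ {z | (φ z).re ≤ c₂}) f W)
      (wDistOn p v (S ∩ {z | c₁ ≤ (φ z).re}) f W) := by
  by_contra! hlt
  obtain ⟨r₂, -, hr₂, hr₂S⟩ := ENNReal.lt_iff_exists_real_btwn.1 hlt
  obtain ⟨r, hr0, hr, hrr₂⟩ := ENNReal.lt_iff_exists_real_btwn.1 hr₂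
  replace hrr₂ : r < r₂ := (ENNReal.ofReal_lt_ofReal_iff'.1 hrr₂).1
  obtain ⟨g₁, hg₁, hg₁r⟩ := exists_forall_lt_of_wDistOn_lt (hr.trans_le' (le_max_left _ _))
  obtain ⟨g₂, hg₂, hg₂r⟩ := exists_forall_lt_of_wDistOn_lt (hr.trans_le' (le_max_right _ _))
  obtain ⟨M₁, hM₁⟩ := hbdd g₁ hg₁
  obtain ⟨M₂, hM₂⟩ := hbdd g₂ hg₂
  set M := |M₁| + |M₂| + 1
  -- with `δ = (r₂ - r) / M`, the glued approximant stays below `r + δ * M = r₂`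
  have hδ : 0 < (r₂ - r) / M := div_pos (by linarith) (by positivity)
  have hδM : (r₂ - r) / M * M = r₂ - r := div_mul_cancel₀ _ (by positivity)
  obtain ⟨ψ, hψ, hψS⟩ := hφ.exists_near_zero_near_one hφS hc₁ hc₁₂ hc₂ hδ
  refine hr₂S.not_ge (wDistOn_le_ofReal (hψ g₂ hg₂ g₁ hg₁) fun z hz => ?_)
  by_cases hvz : v z = 0
  · simp [hvz]
    linarith
  obtain ⟨w, hw, hψz, hwlow, hwhigh⟩ := hψS z ⟨hz, hvz⟩
  have hglue : v z * p (f z - (ψ z • g₂ z + (1 - ψ z) • g₁ z))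
      ≤ w * (v z * p (f z - g₂ z)) + (1 - w) * (v z * p (f z - g₁ z)) := by
    rw [hψz]
    nlinarith [mul_le_mul_of_nonneg_left
      (p.map_sub_convexCombo_le (f z) (g₁ z) (g₂ z) hw) (hv0 z)]
  have hu₁ := mul_nonneg (hv0 z) (apply_nonneg p (f z - g₁ z))
  have hu₂ := mul_nonneg (hv0 z) (apply_nonneg p (f z - g₂ z))
  have hM₁z : v z * p (f z - g₁ z) ≤ M := by linarith [hM₁ z, le_abs_self M₁, abs_nonneg M₂]
  have hM₂z : v z * p (f z - g₂ z) ≤ M := by linarith [hM₂ z, le_abs_self M₂, abs_nonneg M₁]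
  refine hglue.trans ?_
  rcases le_or_gt (φ z).re c₁ with h₁ | h₁
  · have := hg₁r z ⟨hz, h₁.trans hc₁₂.le⟩
    nlinarith [hwlow h₁, hw.1, hw.2]
  rcases le_or_gt (φ z).re c₂ with h₂ | h₂
  · have := hg₁r z ⟨hz, h₂⟩
    have := hg₂r z ⟨hz, h₁.le⟩
    nlinarith [hw.1, hw.2]
  · have := hg₂r z ⟨hz, h₁.le⟩
    nlinarith [hwhigh h₂.le, hw.1, hw.2]

variable [TopologicalSpace Ω]

theorem eq_of_minimal_isClosed_le_wDistOn (hv0 : ∀ x, 0 ≤ v x)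
    (hbdd : ∀ g ∈ W, ∃ M, ∀ x, v x * p (f x - g x) ≤ M)
    {φ : Ω → ℂ} (hφc : Continuous φ) (hφ : IsMultiplier W φ) {d : ℝ≥0∞} {S : Set Ω}
    (hS : Minimal (fun E => IsClosed E ∧ d ≤ wDistOn p v E f W) S)
    (hφS : ∀ z ∈ S ∩ {z | v z ≠ 0}, φ z ∈ Complex.ofReal '' Icc 0 1)
    {x y : Ω} (hx : x ∈ S ∩ {z | v z ≠ 0}) (hy : y ∈ S ∩ {z | v z ≠ 0}) : φ x = φ y := by
  obtain ⟨a, ha, hxa⟩ := hφS x hx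
  obtain ⟨b, hb, hyb⟩ := hφS y hy
  rw [← hxa, ← hyb, Complex.ofReal_inj]
  by_contra hne
  wlog hab : a < b generalizing x y a b
  · exact this hy hx b hb hyb a ha hxa (Ne.symm hne)
      (lt_of_le_of_ne (not_lt.1 hab) (Ne.symm hne))
  obtain ⟨c₁, hac₁, hc₁b⟩ := exists_between hab
  obtain ⟨c₂, hc₁₂, hc₂b⟩ := exists_between hc₁b
  have hre : Continuous fun z => (φ z).re := Complex.continuous_re.comp hφc
  have hlt : ∀ E, IsClosed E → ∀ z ∈ S, z ∉ E → wDistOn p v (S ∩ E) f W < d :=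
    fun E hE z hz hzE => not_le.1 fun h =>
      hzE (hS.2 ⟨hS.1.1.inter hE, h⟩ inter_subset_left hz).2
  have hlt₂ := hlt {z | (φ z).re ≤ c₂} (isClosed_le hre continuous_const) y hy.1
    (by simp [← hyb, hc₂b])
  have hlt₁ := hlt {z | c₁ ≤ (φ z).re} (isClosed_le continuous_const hre) x hx.1
    (by simp [← hxa, hac₁])
  exact (max_lt hlt₂ hlt₁).not_ge (hS.1.2.trans (wDistOn_le_max_of_isMultiplier hv0 hbdd hφ hφS
    (ha.1.trans_lt hac₁) hc₁₂ (hc₂b.le.trans hb.2)))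

end Localization

theorem stmt_11_general {Ω X : Type*} [TopologicalSpace Ω] [AddCommGroup X]
    [Module ℂ X] [TopologicalSpace X]
    (p : Seminorm ℂ X) (hp : Continuous p)
    (v : Ω → ℝ) (hv0 : ∀ x, 0 ≤ v x) (hvusc : UpperSemicontinuous v)
    (W : Set (Ω → X)) (f : Ω → X) (A : Set (Ω → ℂ))
    (hAc : ∀ φ ∈ A, Continuous φ)
    (hmul : ∀ φ ∈ A, ∀ g ∈ W, ∀ h ∈ W,
      (fun x => φ x • g x + (1 - φ x) • h x) ∈ W)
    (hC : ∀ g ∈ W, Continuous (fun x => f x - g x))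
    (h0 : ∀ g ∈ W, ∀ ε > (0 : ℝ),
      IsCompact {x : Ω | ε ≤ v x * p (f x - g x)}) :
    ∃ S : Set Ω, S ⊆ closure {x : Ω | v x ≠ 0} ∧
      (∀ φ ∈ A, (∀ x ∈ S, φ x ∈ Complex.ofReal '' Set.Icc (0 : ℝ) 1) →
        ∀ x ∈ S, ∀ y ∈ S, φ x = φ y) ∧
      wDistOn p v S f W = wDistOn p v Set.univ f W := by
  have husc : ∀ g ∈ W, UpperSemicontinuous fun x => v x * p (f x - g x) := fun g hg =>
    hvusc.mul_continuous_of_nonneg hv0 (hp.comp (hC g hg)) fun _ => apply_nonneg p _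
  have hbdd : ∀ g ∈ W, ∃ M, ∀ x, v x * p (f x - g x) ≤ M := fun g hg =>
    (husc g hg).exists_forall_le_of_isCompact (h0 g hg 1 one_pos)
  obtain ⟨S, hS⟩ := exists_minimal_isClosed_le_wDistOn husc h0
  refine ⟨S ∩ {x | v x ≠ 0}, fun x hx => subset_closure hx.2,
    fun φ hφA hφS x hx y hy =>
      eq_of_minimal_isClosed_le_wDistOn hv0 hbdd (hAc φ hφA) (hmul φ hφA) hS hφS hx hy, ?_⟩
  rw [wDistOn_inter_ne_zero]
  exact le_antisymm (wDistOn_mono (subset_univ S)) hS.1.2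

theorem stmt_11 {Ω X : Type*} [TopologicalSpace Ω] [AddCommGroup X]
    [Module ℂ X] [TopologicalSpace X] [IsTopologicalAddGroup X]
    [ContinuousSMul ℂ X] [LocallyConvexSpace ℝ X]
    (p : Seminorm ℂ X) (hp : Continuous p)
    (v : Ω → ℝ) (hv0 : ∀ x, 0 ≤ v x) (hvusc : UpperSemicontinuous v)
    (W : Set (Ω → X)) (f : Ω → X) (A : Set (Ω → ℂ))
    (hAc : ∀ φ ∈ A, Continuous φ)
    (hmul : ∀ φ ∈ A, ∀ g ∈ W, ∀ h ∈ W,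
      (fun x => φ x • g x + (1 - φ x) • h x) ∈ W)
    (hC : ∀ g ∈ W, Continuous (fun x => f x - g x))
    (h0 : ∀ g ∈ W, ∀ ε > (0 : ℝ),
      IsCompact {x : Ω | ε ≤ v x * p (f x - g x)}) :
    ∃ S : Set Ω, S ⊆ closure {x : Ω | v x ≠ 0} ∧
      (∀ φ ∈ A, (∀ x ∈ S, φ x ∈ Complex.ofReal '' Set.Icc (0 : ℝ) 1) →
        ∀ x ∈ S, ∀ y ∈ S, φ x = φ y) ∧
      wDistOn p v S f W = wDistOn p v Set.univ f W :=
  stmt_11_general p hp v hv0 hvusc W f A hAc hmul hC h0
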